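/- Let L be a Leibniz algebra over ℂ and J the solvable radical of L, i.e., a solvable ideal of L containing every solvable ideal of L. Then D(J) ⊆ J for every derivation D of L. -/

import Mathlib

/-- The span of all brackets `[x,y]` with `x ∈ M`, `y ∈ N`. -/
def bracketSpan {L : Type*} [AddCommGroup L] [Module ℂ L]
    (b : L →ₗ[ℂ] L →ₗ[ℂ] L) (M N : Submodule ℂ L) : Submodule ℂ L :=
  Submodule.span ℂ {z : L | ∃ x ∈ M, ∃ y ∈ N, z = b x y}

/-- A submodule `J` of a Leibniz algebra with bracket `b` is an ideal if
`[J,L] ⊆ J` and `[L,J] ⊆ J`. -/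
def IsLeibnizIdeal {L : Type*} [AddCommGroup L] [Module ℂ L]
    (b : L →ₗ[ℂ] L →ₗ[ℂ] L) (J : Submodule ℂ L) : Prop :=
  (∀ x ∈ J, ∀ y : L, b x y ∈ J) ∧ (∀ x ∈ J, ∀ y : L, b y x ∈ J)

/-- The derived series of a submodule `M`: `leibnizDerivedSeries b M n = M^{(n+1)}`, i.e.
`leibnizDerivedSeries b M 0 = M (= M^{(1)})` and `M^{(n+1)} = [M^{(n)}, M^{(n)}]`. -/
def leibnizDerivedSeries {L : Type*} [AddCommGroup L] [Module ℂ L]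
    (b : L →ₗ[ℂ] L →ₗ[ℂ] L) (M : Submodule ℂ L) : ℕ → Submodule ℂ L
  | 0 => M
  | n + 1 => bracketSpan b (leibnizDerivedSeries b M n) (leibnizDerivedSeries b M n)

/-- A submodule `M` is solvable if some term of its derived series vanishes. -/
def IsSolvableSubmodule {L : Type*} [AddCommGroup L] [Module ℂ L]
    (b : L →ₗ[ℂ] L →ₗ[ℂ] L) (M : Submodule ℂ L) : Prop :=
  ∃ s : ℕ, leibnizDerivedSeries b M s = ⊥


/-!
Put `B = J + D(J)`; it is an ideal because `D` is a derivation. Iterating the derivation rule gives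
`D^m [u, v] = ∑_{i+j=m} binom(m, i) [D^i u, D^j v]`. With `J^{(n)}` the derived series of `J`,
induction on `n` then shows that `D^k` maps `J^{(n)}` into `J` for `k < 2^n`. For `k = 2^n` and
`u, v ∈ J^{(n)}`, all terms but the middle one of `D^{2k} [u, v]` lie in `J`, and the middle
coefficient `binom(2k, k)` is invertible in `ℂ`. Hence `B^{(n)} ⊆ J + D^{2^n}(J^{(n)})`, so
`B^{(s)} ⊆ J` when `J^{(s)} = 0`. Then `B` is solvable, and maximality of `J` gives `D(J) ⊆ B ⊆ J`.
-/

section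

open Finset

variable {L : Type*} [AddCommGroup L] [Module ℂ L] {b : L →ₗ[ℂ] L →ₗ[ℂ] L}

def IsLeibnizDerivation (b : L →ₗ[ℂ] L →ₗ[ℂ] L) (D : Module.End ℂ L) : Prop :=
  ∀ x y : L, D (b x y) = b (D x) y + b x (D y)

lemma mem_bracketSpan {M N : Submodule ℂ L} {x y : L} (hx : x ∈ M) (hy : y ∈ N) :
    b x y ∈ bracketSpan b M N :=
  Submodule.subset_span ⟨x, hx, y, hy, rfl⟩

lemma bracketSpan_le {M N P : Submodule ℂ L} (h : ∀ x ∈ M, ∀ y ∈ N, b x y ∈ P) :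
    bracketSpan b M N ≤ P := by
  rw [bracketSpan, Submodule.span_le]
  rintro _ ⟨x, hx, y, hy, rfl⟩
  exact h x hx y hy

lemma bracketSpan_mono {M N M' N' : Submodule ℂ L} (hM : M ≤ M') (hN : N ≤ N') :
    bracketSpan b M N ≤ bracketSpan b M' N' :=
  bracketSpan_le fun _ hx _ hy => mem_bracketSpan (hM hx) (hN hy)

lemma leibnizDerivedSeries_succ (M : Submodule ℂ L) (n : ℕ) :
    leibnizDerivedSeries b M (n + 1) =
      bracketSpan b (leibnizDerivedSeries b M n) (leibnizDerivedSeries b M n) :=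
  rfl

lemma leibnizDerivedSeries_mono {M N : Submodule ℂ L} (h : M ≤ N) (n : ℕ) :
    leibnizDerivedSeries b M n ≤ leibnizDerivedSeries b N n := by
  induction n with
  | zero => exact h
  | succ n ih => exact bracketSpan_mono ih ih

lemma leibnizDerivedSeries_add (M : Submodule ℂ L) (m n : ℕ) :
    leibnizDerivedSeries b M (m + n) =
      leibnizDerivedSeries b (leibnizDerivedSeries b M m) n := by
  induction n with
  | zero => rfl
  | succ n ih => rw [← add_assoc, leibnizDerivedSeries_succ, ih]; rfl

lemma IsSolvableSubmodule.of_leibnizDerivedSeries_le {M J : Submodule ℂ L} {m : ℕ}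
    (hJ : IsSolvableSubmodule b J) (h : leibnizDerivedSeries b M m ≤ J) :
    IsSolvableSubmodule b M := by
  obtain ⟨s, hs⟩ := hJ
  refine ⟨m + s, le_bot_iff.mp ?_⟩
  rw [leibnizDerivedSeries_add, ← hs]
  exact leibnizDerivedSeries_mono h s

lemma IsLeibnizIdeal.sum_smul_bracket_mem {J : Submodule ℂ L} (hJ : IsLeibnizIdeal b J)
    {ι : Type*} (s : Finset ι) (c : ι → ℕ) (f g : ι → L) (h : ∀ i ∈ s, f i ∈ J ∨ g i ∈ J) :
    ∑ i ∈ s, c i • b (f i) (g i) ∈ J :=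
  sum_mem fun i hi => J.nsmul_mem ((h i hi).elim (fun hf => hJ.1 _ hf _) (fun hg => hJ.2 _ hg _)) _

lemma IsLeibnizIdeal.bracketSpan_sup_le {J : Submodule ℂ L} (hJ : IsLeibnizIdeal b J)
    (M N : Submodule ℂ L) : bracketSpan b (J ⊔ M) (J ⊔ N) ≤ J ⊔ bracketSpan b M N := by
  refine bracketSpan_le fun x hx y hy => ?_
  obtain ⟨j, hj, m, hm, rfl⟩ := Submodule.mem_sup.mp hx
  obtain ⟨j', hj', n, hn, rfl⟩ := Submodule.mem_sup.mp hy
  simp only [map_add, LinearMap.add_apply]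
  refine add_mem (add_mem ?_ ?_) (add_mem ?_ ?_) <;>
    first
    | exact Submodule.mem_sup_right (mem_bracketSpan hm hn)
    | exact Submodule.mem_sup_left (hJ.1 _ hj _)
    | exact Submodule.mem_sup_left (hJ.2 _ hj' _)

lemma IsLeibnizIdeal.sup_map_derivation {J : Submodule ℂ L} (hJ : IsLeibnizIdeal b J)
    {D : Module.End ℂ L} (hD : IsLeibnizDerivation b D) : IsLeibnizIdeal b (J ⊔ J.map D) := by
  have hJB {x : L} (hx : x ∈ J) : x ∈ J ⊔ J.map D := Submodule.mem_sup_left hx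
  have hDB {x : L} (hx : x ∈ J) : D x ∈ J ⊔ J.map D :=
    Submodule.mem_sup_right (Submodule.mem_map_of_mem hx)
  constructor
  · intro x hx y
    obtain ⟨j, hj, _, ⟨u, hu, rfl⟩, rfl⟩ := Submodule.mem_sup.mp hx
    rw [map_add, LinearMap.add_apply, eq_sub_of_add_eq (hD u y).symm]
    exact add_mem (hJB (hJ.1 j hj y)) (sub_mem (hDB (hJ.1 u hu y)) (hJB (hJ.1 u hu (D y))))
  · intro x hx y
    obtain ⟨j, hj, _, ⟨u, hu, rfl⟩, rfl⟩ := Submodule.mem_sup.mp hx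
    rw [map_add, eq_sub_of_add_eq' (hD y u).symm]
    exact add_mem (hJB (hJ.2 j hj y)) (sub_mem (hDB (hJ.2 u hu y)) (hJB (hJ.2 u hu (D y))))

namespace IsLeibnizDerivation

variable {D : Module.End ℂ L}

lemma pow_apply_bracket (hD : IsLeibnizDerivation b D) (n : ℕ) (x y : L) :
    (D ^ n) (b x y) = ∑ ij ∈ antidiagonal n, n.choose ij.1 • b ((D ^ ij.1) x) ((D ^ ij.2) y) := by
  have hsucc (m : ℕ) (z : L) : D ((D ^ m) z) = (D ^ (m + 1)) z := by
    rw [pow_succ', Module.End.mul_apply]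
  induction n with
  | zero => simp
  | succ n ih =>
    rw [sum_antidiagonal_choose_succ_nsmul (fun i j => b ((D ^ i) x) ((D ^ j) y)) n, ← hsucc, ih]
    simp only [map_sum, map_nsmul, hD _ _, hsucc, smul_add, sum_add_distrib]
    rw [add_comm]
    congr 1
    refine sum_congr rfl fun ⟨i, j⟩ hij => ?_
    rw [n.choose_symm_of_eq_add (mem_antidiagonal.1 hij).symm]

variable {J : Submodule ℂ L}

lemma pow_apply_mem_of_lt_two_pow (hD : IsLeibnizDerivation b D) (hJ : IsLeibnizIdeal b J)
    (n : ℕ) {k : ℕ} (hk : k < 2 ^ n) {x : L} (hx : x ∈ leibnizDerivedSeries b J n) :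
    (D ^ k) x ∈ J := by
  induction n generalizing k x with
  | zero => rw [show k = 0 by simpa using hk, pow_zero]; exact hx
  | succ n ih =>
    suffices leibnizDerivedSeries b J (n + 1) ≤ J.comap (D ^ k) from this hx
    refine bracketSpan_le fun u hu v hv => ?_
    rw [Submodule.mem_comap, hD.pow_apply_bracket]
    refine hJ.sum_smul_bracket_mem _ _ _ _ fun ij hij => ?_
    have : ij.1 + ij.2 < 2 * 2 ^ n := mem_antidiagonal.1 hij ▸ pow_succ' 2 n ▸ hk
    by_cases hi : ij.1 < 2 ^ n
    · exact .inl (ih hi hu)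
    · exact .inr (ih (by omega) hv)

lemma bracket_pow_mem_sup (hD : IsLeibnizDerivation b D) (hJ : IsLeibnizIdeal b J) {n : ℕ}
    {u v : L} (hu : u ∈ leibnizDerivedSeries b J n) (hv : v ∈ leibnizDerivedSeries b J n) :
    b ((D ^ 2 ^ n) u) ((D ^ 2 ^ n) v) ∈
      J ⊔ (leibnizDerivedSeries b J (n + 1)).map (D ^ 2 ^ (n + 1)) := by
  set k := 2 ^ n
  have hexpand := hD.pow_apply_bracket (2 * k) u v
  have hkk : (k, k) ∈ antidiagonal (2 * k) := mem_antidiagonal.2 (two_mul k).symm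
  rw [← add_sum_erase _ _ hkk] at hexpand
  have hrest : ∑ ij ∈ (antidiagonal (2 * k)).erase (k, k),
      (2 * k).choose ij.1 • b ((D ^ ij.1) u) ((D ^ ij.2) v) ∈ J := by
    refine hJ.sum_smul_bracket_mem _ _ _ _ fun ⟨i, j⟩ hij => ?_
    obtain ⟨hne, hsum⟩ := mem_erase.1 hij
    have hsum : i + j = 2 * k := mem_antidiagonal.1 hsum
    by_cases hi : i < k
    · exact .inl (hD.pow_apply_mem_of_lt_two_pow hJ n hi hu)
    · have hj : j < k := by
        by_contra hj
        exact hne (Prod.ext (by omega) (by omega))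
      exact .inr (hD.pow_apply_mem_of_lt_two_pow hJ n hj hv)
  have hc : ((2 * k).choose k : ℂ) ≠ 0 := Nat.cast_ne_zero.2 (Nat.choose_pos (by omega)).ne'
  rw [← inv_smul_smul₀ hc (b _ _), Nat.cast_smul_eq_nsmul, eq_sub_of_add_eq hexpand.symm]
  refine Submodule.smul_mem _ _ (sub_mem (Submodule.mem_sup_right ?_) (Submodule.mem_sup_left hrest))
  rw [pow_succ']
  exact Submodule.mem_map_of_mem (mem_bracketSpan hu hv)

lemma leibnizDerivedSeries_sup_map_le (hD : IsLeibnizDerivation b D) (hJ : IsLeibnizIdeal b J)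
    (n : ℕ) : leibnizDerivedSeries b (J ⊔ J.map D) n ≤
      J ⊔ (leibnizDerivedSeries b J n).map (D ^ 2 ^ n) := by
  induction n with
  | zero => simp [leibnizDerivedSeries]
  | succ n ih =>
    calc leibnizDerivedSeries b (J ⊔ J.map D) (n + 1)
        ≤ bracketSpan b (J ⊔ (leibnizDerivedSeries b J n).map (D ^ 2 ^ n))
            (J ⊔ (leibnizDerivedSeries b J n).map (D ^ 2 ^ n)) := bracketSpan_mono ih ih
      _ ≤ J ⊔ bracketSpan b ((leibnizDerivedSeries b J n).map (D ^ 2 ^ n))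
            ((leibnizDerivedSeries b J n).map (D ^ 2 ^ n)) := hJ.bracketSpan_sup_le _ _
      _ ≤ J ⊔ (leibnizDerivedSeries b J (n + 1)).map (D ^ 2 ^ (n + 1)) := by
        refine sup_le le_sup_left (bracketSpan_le ?_)
        rintro _ ⟨u, hu, rfl⟩ _ ⟨v, hv, rfl⟩
        exact hD.bracket_pow_mem_sup hJ hu hv

end IsLeibnizDerivation

end

theorem leibniz_solvable_radical_invariant_under_derivations_general
    {L : Type*} [AddCommGroup L] [Module ℂ L]
    (b : L →ₗ[ℂ] L →ₗ[ℂ] L)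
    (J : Submodule ℂ L)
    (hJ : IsLeibnizIdeal b J)
    (hJsolv : IsSolvableSubmodule b J)
    (hJmax : ∀ I : Submodule ℂ L, IsLeibnizIdeal b I → IsSolvableSubmodule b I → I ≤ J) :
    ∀ D : Module.End ℂ L, (∀ x y : L, D (b x y) = b (D x) y + b x (D y)) →
      J.map D ≤ J := by
  intro D hD
  obtain ⟨s, hs⟩ := hJsolv
  have hBs : leibnizDerivedSeries b (J ⊔ J.map D) s ≤ J := by
    simpa [hs] using IsLeibnizDerivation.leibnizDerivedSeries_sup_map_le hD hJ s
  have hBsolv : IsSolvableSubmodule b (J ⊔ J.map D) := .of_leibnizDerivedSeries_le ⟨s, hs⟩ hBs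
  exact le_sup_right.trans (hJmax _ (hJ.sup_map_derivation hD) hBsolv)

/-- Let `L` be a Leibniz algebra over ℂ and `J` the solvable radical of `L`
(a solvable ideal containing every solvable ideal). Then `D(J) ⊆ J` for every derivation
`D` of `L`. -/
theorem leibniz_solvable_radical_invariant_under_derivations
    {L : Type*} [AddCommGroup L] [Module ℂ L]
    (b : L →ₗ[ℂ] L →ₗ[ℂ] L)
    (leib : ∀ x y z : L, b (b x y) z = b (b x z) y + b x (b y z))
    (J : Submodule ℂ L)
    (hJ : IsLeibnizIdeal b J)
    (hJsolv : IsSolvableSubmodule b J)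
    (hJmax : ∀ I : Submodule ℂ L, IsLeibnizIdeal b I → IsSolvableSubmodule b I → I ≤ J) :
    ∀ D : Module.End ℂ L, (∀ x y : L, D (b x y) = b (D x) y + b x (D y)) →
      J.map D ≤ J :=
  leibniz_solvable_radical_invariant_under_derivations_general b J hJ hJsolv hJmax
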